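/- If (RG)^- is anticommutative and G is nonabelian, then G has a unique nontrivial commutator s, s lies in Z(G) ∩ G_*, s² = 1, and x^* ∈ {x, sx} for all x ∈ G. -/

import Mathlib

/-!
Write `x*` for `inv x` and `α_x = x - σ(x) x*`; these elements are skew. Comparing coefficients in
`α_x α_y + α_y α_x = 0` shows first that `x` commutes with `x*` and `x*² = x²`, so the twist
`t_x = x⁻¹ x*` is an involution commuting with `x`, trivial exactly when `x` is symmetric.
Further comparisons show that all non-symmetric elements have the same twist `s`: for commuting
ones directly; for non-commuting `x, y` the coefficient of `xy` says that `x*` or `y*` is a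
conjugate of `x` or `y`, and the one configuration (up to swapping `x, y`) not excluded by group
theory is ruled out by the pair `(xy, y)`. Then `s` is central, `x* ∈ {x, s x}`, and
`[a, b] = t_b t_a t_{ab}⁻¹ ∈ {1, s}`.
-/

open Finsupp

/-- The generalized oriented map σ* on the group ring RG. -/
noncomputable def sigmaStar {R : Type} [CommRing R] {G : Type} [Group G]
    (inv : G → G) (σ : G →* Rˣ) (α : MonoidAlgebra R G) : MonoidAlgebra R G :=
  α.coeff.sum fun x a => MonoidAlgebra.single (inv x) ((σ x : R) * a)

/-- The set of skew-symmetric elements of RG under σ*. -/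
def skewSet {R : Type} [CommRing R] {G : Type} [Group G]
    (inv : G → G) (σ : G →* Rˣ) : Set (MonoidAlgebra R G) :=
  {α | sigmaStar inv σ α = -α}

open scoped commutatorElement

section SigmaStar

variable {R : Type} [CommRing R] {G : Type} [Group G] (inv : G → G) (σ : G →* Rˣ)

theorem sigmaStar_single (x : G) (c : R) :
    sigmaStar inv σ (MonoidAlgebra.single x c) = MonoidAlgebra.single (inv x) (σ x * c) := by
  rw [sigmaStar, MonoidAlgebra.coeff_single, Finsupp.sum_single_index]
  simp

theorem sigmaStar_sub (α β : MonoidAlgebra R G) :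
    sigmaStar inv σ (α - β) = sigmaStar inv σ α - sigmaStar inv σ β := by
  rw [sigmaStar, MonoidAlgebra.coeff_sub, Finsupp.sum_sub_index]
  · rfl
  · intro x a b
    rw [mul_sub, MonoidAlgebra.single_sub]

theorem single_sub_single_mem_skewSet (hinv : ∀ x, inv (inv x) = x)
    (hker : ∀ x, x * inv x ∈ σ.ker) (x : G) :
    MonoidAlgebra.single x 1 - MonoidAlgebra.single (inv x) (σ x : R) ∈ skewSet inv σ := by
  have hσ : (σ (inv x) * σ x : R) = 1 := by
    rw [mul_comm, ← Units.val_mul, ← map_mul, (hker x : σ (x * inv x) = 1), Units.val_one]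
  show sigmaStar inv σ _ = _
  rw [sigmaStar_sub, sigmaStar_single, sigmaStar_single, hinv, mul_one, hσ]
  abel

theorem single_mem_skewSet {w : G} (hw : inv w = w) {c : R} (hc : σ w * c = -c) :
    MonoidAlgebra.single w c ∈ skewSet inv σ := by
  show sigmaStar inv σ _ = _
  rw [sigmaStar_single, hw, hc, MonoidAlgebra.single_neg]

end SigmaStar

def twist {G : Type*} [Group G] (inv : G → G) (x : G) : G := x⁻¹ * inv x

section Twist

variable {G : Type*} [Group G] (inv : G → G)

theorem mul_twist (x : G) : x * twist inv x = inv x := by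
  rw [twist, mul_inv_cancel_left]

theorem twist_eq_one_iff {x : G} : twist inv x = 1 ↔ inv x = x := by
  rw [twist, inv_mul_eq_one, eq_comm]

end Twist

theorem coe_zpowers_of_mul_self {G : Type*} [Group G] {s : G} (hs : s * s = 1) :
    (Subgroup.zpowers s : Set G) = {1, s} := by
  have hs2 : s ^ 2 = 1 := by rw [pow_two, hs]
  ext x
  rw [SetLike.mem_coe, Subgroup.mem_zpowers_iff]
  constructor
  · rintro ⟨k, rfl⟩
    obtain ⟨m, rfl | rfl⟩ := Int.even_or_odd' k
    · simp [zpow_mul, hs2]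
    · simp [zpow_add, zpow_mul, hs2]
  · rintro (rfl | rfl)
    exacts [⟨0, zpow_zero _⟩, ⟨1, zpow_one _⟩]

structure IsSkewAnticomm {R : Type} [CommRing R] {G : Type} [Group G]
    (inv : G → G) (σ : G →* Rˣ) : Prop where
  inv_mul : ∀ x y, inv (x * y) = inv y * inv x
  inv_inv : ∀ x, inv (inv x) = x
  mul_inv_mem_ker : ∀ x, x * inv x ∈ σ.ker
  two_ne_zero : (2 : R) ≠ 0
  anticomm : ∀ α ∈ skewSet inv σ, ∀ β ∈ skewSet inv σ, α * β + β * α = 0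

namespace IsSkewAnticomm

variable {R : Type} [CommRing R] {G : Type} [Group G] {inv : G → G} {σ : G →* Rˣ}

open scoped Classical in
/-- The coefficient of `g` in `α_x α_y + α_y α_x = 0`, where `α_x = x - σ(x) x*`. -/
theorem coeff_eq (h : IsSkewAnticomm inv σ) (x y g : G) :
    (if x * y = g then 1 else 0) + (if y * x = g then 1 else 0)
        + (σ x * σ y : R) *
          ((if inv x * inv y = g then 1 else 0) + (if inv y * inv x = g then 1 else 0))
      = (σ y : R) * ((if x * inv y = g then 1 else 0) + (if inv y * x = g then 1 else 0))
        + (σ x : R) * ((if inv x * y = g then 1 else 0) + (if y * inv x = g then 1 else 0)) := by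
  have hskew := single_sub_single_mem_skewSet inv σ h.inv_inv h.mul_inv_mem_ker
  have H := congrArg (fun f : MonoidAlgebra R G => f.coeff g) (h.anticomm _ (hskew x) _ (hskew y))
  simp only [sub_mul, mul_sub, MonoidAlgebra.single_mul_single, one_mul, mul_one,
    MonoidAlgebra.coeff_sub, MonoidAlgebra.coeff_add, MonoidAlgebra.coeff_single,
    MonoidAlgebra.coeff_zero, Finsupp.sub_apply, Finsupp.add_apply, Finsupp.single_apply,
    Finsupp.zero_apply] at H
  rw [mul_comm (σ y : R)] at H
  simp only [mul_add, mul_ite, mul_one, mul_zero]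
  linear_combination H

theorem sigma_ne_neg_one (h : IsSkewAnticomm inv σ) {w : G} (hw : inv w = w) :
    (σ w : R) ≠ -1 := by
  intro hσ
  have hskew := single_mem_skewSet inv σ hw (c := 1) (by rw [hσ]; ring)
  have H := congrArg (fun f : MonoidAlgebra R G => f.coeff (w * w)) (h.anticomm _ hskew _ hskew)
  simp only [MonoidAlgebra.single_mul_single, one_mul, MonoidAlgebra.coeff_add,
    MonoidAlgebra.coeff_single, MonoidAlgebra.coeff_zero, Finsupp.add_apply,
    Finsupp.single_eq_same, Finsupp.zero_apply] at H
  exact h.two_ne_zero (by linear_combination H)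

theorem sigma_mul_two_ne_zero (h : IsSkewAnticomm inv σ) (x : G) : (σ x : R) * 2 ≠ 0 := by
  rw [Ne, Units.mul_right_eq_zero]
  exact h.two_ne_zero

theorem sigma_ne_zero (h : IsSkewAnticomm inv σ) (x : G) : (σ x : R) ≠ 0 := fun e =>
  h.sigma_mul_two_ne_zero x (by rw [e, zero_mul])

theorem commute_inv_self (h : IsSkewAnticomm inv σ) (x : G) : Commute x (inv x) := by
  by_contra hc
  have hx : x ≠ inv x := fun e => hc (e ▸ Commute.refl x)
  have hc' : ¬ inv x * x = x * inv x := fun e => hc e.symm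
  have H := h.coeff_eq x x (x * inv x)
  simp only [mul_right_inj, mul_left_inj, hx, hx.symm, hc', if_true, if_false] at H
  exact h.sigma_mul_two_ne_zero x (by linear_combination -H)

theorem inv_mul_inv_self (h : IsSkewAnticomm inv σ) (x : G) : inv x * inv x = x * x := by
  by_contra hne
  have hx : x ≠ inv x := fun e => hne (e ▸ rfl)
  have H := h.coeff_eq x x (x * x)
  simp only [mul_right_inj, mul_left_inj, hx.symm, hne, if_true, if_false] at H
  exact h.two_ne_zero (by linear_combination H)

end IsSkewAnticomm

namespace IsSkewAnticomm

variable {R : Type} [CommRing R] {G : Type} [Group G] {inv : G → G} {σ : G →* Rˣ}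

theorem commute_twist (h : IsSkewAnticomm inv σ) (x : G) : Commute (twist inv x) x :=
  (Commute.inv_left (Commute.refl x)).mul_left (h.commute_inv_self x).symm

theorem twist_mul (h : IsSkewAnticomm inv σ) (x : G) : twist inv x * x = inv x := by
  rw [(h.commute_twist x).eq, mul_twist]

theorem twist_eq_inv_mul_inv (h : IsSkewAnticomm inv σ) (x : G) : twist inv x = inv x * x⁻¹ :=
  (h.commute_inv_self x).inv_left.eq

theorem twist_mul_self (h : IsSkewAnticomm inv σ) (x : G) : twist inv x * twist inv x = 1 := by
  calc twist inv x * twist inv x = x⁻¹ * (inv x * x⁻¹) * inv x := by rw [twist]; group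
    _ = x⁻¹ * (x⁻¹ * inv x) * inv x := by rw [← h.twist_eq_inv_mul_inv, twist]
    _ = x⁻¹ * x⁻¹ * (inv x * inv x) := by group
    _ = 1 := by rw [h.inv_mul_inv_self]; group

theorem twist_inv (h : IsSkewAnticomm inv σ) (x : G) : (twist inv x)⁻¹ = twist inv x :=
  inv_eq_of_mul_eq_one_right (h.twist_mul_self x)

theorem map_one (h : IsSkewAnticomm inv σ) : inv 1 = 1 := by
  have h1 := h.inv_mul 1 1
  rwa [one_mul, left_eq_mul] at h1

theorem map_inv (h : IsSkewAnticomm inv σ) (x : G) : inv x⁻¹ = (inv x)⁻¹ :=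
  eq_inv_of_mul_eq_one_left (by rw [← h.inv_mul, mul_inv_cancel, h.map_one])

theorem inv_twist (h : IsSkewAnticomm inv σ) (x : G) : inv (twist inv x) = twist inv x :=
  calc inv (twist inv x) = x * (inv x)⁻¹ := by rw [twist, h.inv_mul, h.inv_inv, h.map_inv]
    _ = x * (twist inv x)⁻¹ * x⁻¹ := by rw [← mul_twist inv x]; group
    _ = twist inv x := by rw [h.twist_inv, ← (h.commute_twist x).eq]; group

theorem inv_mul_inv_eq_mul_iff (h : IsSkewAnticomm inv σ) {x y : G} :
    inv x * inv y = x * y ↔ twist inv x = twist inv y := by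
  rw [← mul_twist inv x, ← mul_twist inv y, mul_assoc, mul_right_inj, ← (h.commute_twist y).eq,
    ← mul_assoc, mul_eq_right, mul_eq_one_iff_eq_inv, h.twist_inv]

theorem inv_mul_eq_mul_inv_iff (h : IsSkewAnticomm inv σ) {x y : G} :
    inv x * y = x * inv y ↔ twist inv x = twist inv y := by
  rw [← mul_twist inv x, ← mul_twist inv y, mul_assoc, mul_right_inj, ← (h.commute_twist y).eq,
    mul_left_inj]

theorem twist_eq_of_inv_mul_eq_of_mul_inv_eq (h : IsSkewAnticomm inv σ) {x y : G}
    (hy : inv y * x = x * y) (hx : y * inv x = x * y) : twist inv x = twist inv y := by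
  have ex : inv x = y⁻¹ * (x * y) := by rw [← hx]; group
  have ey : inv y = x * y * x⁻¹ := by rw [← hy]; group
  rw [h.twist_eq_inv_mul_inv, twist, ex, ey]
  group

theorem twist_eq_of_mul_inv_eq_of_mul_inv_eq (h : IsSkewAnticomm inv σ) {x y : G}
    (hx : y * inv x = x * y) (hy : x * inv y = y * x) : twist inv x = twist inv y := by
  have ex : inv x = y⁻¹ * (x * y) := by rw [← hx]; group
  have ey : inv y = x⁻¹ * (y * x) := by rw [← hy]; group
  rw [← h.twist_inv x, twist, twist, ex, ey]
  group

theorem twist_eq_of_inv_mul_eq_of_inv_mul_eq (h : IsSkewAnticomm inv σ) {x y : G}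
    (hy : inv y * x = x * y) (hx : inv x * y = y * x) : twist inv x = twist inv y := by
  have ex : inv x = y * x * y⁻¹ := by rw [← hx]; group
  have ey : inv y = x * y * x⁻¹ := by rw [← hy]; group
  rw [← h.twist_inv x, h.twist_eq_inv_mul_inv, h.twist_eq_inv_mul_inv, ex, ey]
  group

theorem twist_eq_of_commute (h : IsSkewAnticomm inv σ) {x y : G} (hx : inv x ≠ x)
    (hy : inv y ≠ y) (hxy : x * y = y * x) : twist inv x = twist inv y := by
  by_contra hst
  have e₁ : ¬ inv x * inv y = x * y := h.inv_mul_inv_eq_mul_iff.not.mpr hst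
  have e₂ : ¬ inv y * inv x = x * y := by rw [hxy, h.inv_mul_inv_eq_mul_iff]; exact Ne.symm hst
  have e₃ : ¬ inv y * x = x * y := by rw [hxy, mul_left_inj]; exact hy
  have e₄ : ¬ y * inv x = x * y := by rw [hxy, mul_right_inj]; exact hx
  have H := h.coeff_eq x y (x * y)
  simp only [mul_right_inj, mul_left_inj, hx, hy, hxy.symm, e₁, e₂, e₃, e₄, if_true,
    if_false] at H
  exact h.two_ne_zero (by linear_combination H)

theorem mul_eq_mul_inv_or_sigma_add_eq_zero (h : IsSkewAnticomm inv σ) {u v : G}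
    (hv : inv v ≠ v) (ht : twist inv u = twist inv v) (huv : u * v ≠ v * u) :
    v * u = u * inv v ∨ (σ u : R) + σ v = 0 := by
  refine or_iff_not_imp_left.mpr fun hvu => ?_
  have e₁ : inv u * inv v = u * v := h.inv_mul_inv_eq_mul_iff.mpr ht
  have e₂ : inv v * inv u = v * u := h.inv_mul_inv_eq_mul_iff.mpr ht.symm
  have e₃ : inv u * v = u * inv v := h.inv_mul_eq_mul_inv_iff.mpr ht
  have e₄ : inv v * u = v * inv u := h.inv_mul_eq_mul_inv_iff.mpr ht.symm
  have e₅ : ¬ v * inv u = u * inv v := by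
    rw [← mul_twist inv u, ← mul_twist inv v, ht, ← mul_assoc, ← mul_assoc, mul_left_inj]
    exact Ne.symm huv
  have H := h.coeff_eq u v (u * inv v)
  simp only [e₁, e₂, e₃, e₄, e₅, hvu, mul_right_inj, hv.symm, if_true, if_false] at H
  linear_combination -H

theorem inv_mul_eq_or_mul_inv_eq_of_twist_ne (h : IsSkewAnticomm inv σ) {x y : G}
    (hx : inv x ≠ x) (hy : inv y ≠ y) (hxy : x * y ≠ y * x) (hst : twist inv x ≠ twist inv y) :
    (inv y * x = x * y ∧ (σ y : R) = 1) ∨ (y * inv x = x * y ∧ (σ x : R) = 1) := by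
  have e₁ : ¬ inv x * inv y = x * y := h.inv_mul_inv_eq_mul_iff.not.mpr hst
  have H := h.coeff_eq x y (x * y)
  simp only [mul_right_inj, mul_left_inj, hx, hy, Ne.symm hxy, e₁, if_true, if_false] at H
  by_cases hA₄ : inv y * inv x = x * y
  · have hA₂ : ¬ inv y * x = x * y := by rw [← hA₄, mul_right_inj]; exact Ne.symm hx
    have hA₃ : ¬ y * inv x = x * y := by rw [← hA₄, mul_left_inj]; exact Ne.symm hy
    simp only [hA₂, hA₃, hA₄, if_true, if_false] at H
    refine absurd ?_ (h.sigma_ne_neg_one (w := x * y) (by rw [h.inv_mul, hA₄]))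
    rw [map_mul, Units.val_mul]
    linear_combination H
  by_cases hA₂ : inv y * x = x * y
  · have hA₃ : ¬ y * inv x = x * y := fun hA₃ =>
      hst (h.twist_eq_of_inv_mul_eq_of_mul_inv_eq hA₂ hA₃)
    simp only [hA₂, hA₃, hA₄, if_true, if_false] at H
    exact Or.inl ⟨hA₂, by linear_combination -H⟩
  by_cases hA₃ : y * inv x = x * y
  · simp only [hA₂, hA₃, hA₄, if_true, if_false] at H
    exact Or.inr ⟨hA₃, by linear_combination -H⟩
  simp only [hA₂, hA₃, hA₄, if_false] at H
  exact absurd (by linear_combination 2 * H) h.two_ne_zero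

theorem sigma_ne_one_of_twist_ne (h : IsSkewAnticomm inv σ) {x y : G} (hx : inv x ≠ x)
    (hy : inv y ≠ y) (hxy : x * y ≠ y * x) (hst : twist inv x ≠ twist inv y)
    (hA : y * inv x = x * y) (hB : inv x * y = y * x) : (σ x : R) ≠ 1 := by
  intro hσ
  have hB' : ¬ x * inv y = y * x := fun hB' =>
    hst (h.twist_eq_of_mul_inv_eq_of_mul_inv_eq hA hB')
  -- Comparing coefficients of `x y*` shows that `x y` has the twist of `y`.
  have hC : inv y * inv x = x * inv y := by
    by_contra hC
    have e₁ : ¬ y * x = x * inv y := Ne.symm hB'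
    have e₂ : ¬ inv x * y = x * inv y := by rw [hB]; exact e₁
    have e₃ : ¬ y * inv x = x * inv y := by rw [hA, mul_right_inj]; exact hy.symm
    have H := h.coeff_eq x y (x * inv y)
    simp only [e₁, e₂, e₃, mul_right_inj, mul_left_inj, hy.symm, hx, hC, if_true,
      if_false] at H
    by_cases hD : inv y * x = x * inv y
    · simp only [hD, if_true] at H
      exact h.sigma_mul_two_ne_zero y (by linear_combination -H)
    · simp only [hD, if_false] at H
      exact h.sigma_ne_zero y (by linear_combination -H)
  have ht : twist inv (x * y) = twist inv y := by rw [twist, twist, h.inv_mul, hC]; group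
  rcases h.mul_eq_mul_inv_or_sigma_add_eq_zero hy ht
      (fun e => hxy (mul_right_cancel (e.trans (mul_assoc y x y).symm))) with e | e
  · have ex : inv x = y⁻¹ * (x * y) := by rw [← hA]; group
    have ey : inv y = (x * y)⁻¹ * (y * (x * y)) := by rw [e]; group
    apply hst
    rw [← h.twist_inv x, h.twist_eq_inv_mul_inv y, twist, ex, ey]
    group
  · rw [map_mul, Units.val_mul, hσ] at e
    exact h.sigma_mul_two_ne_zero y (by linear_combination e)

theorem twist_eq_of_not_commute (h : IsSkewAnticomm inv σ) {x y : G} (hx : inv x ≠ x)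
    (hy : inv y ≠ y) (hxy : x * y ≠ y * x) : twist inv x = twist inv y := by
  by_contra hst
  rcases h.inv_mul_eq_or_mul_inv_eq_of_twist_ne hx hy hxy hst with ⟨hA₂, hσy⟩ | ⟨hA₃, hσx⟩ <;>
  rcases h.inv_mul_eq_or_mul_inv_eq_of_twist_ne hy hx (Ne.symm hxy) (Ne.symm hst)
    with ⟨hB₃, -⟩ | ⟨hB₂, -⟩
  · exact hst (h.twist_eq_of_inv_mul_eq_of_inv_mul_eq hA₂ hB₃)
  · exact h.sigma_ne_one_of_twist_ne hy hx (Ne.symm hxy) (Ne.symm hst) hB₂ hA₂ hσy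
  · exact h.sigma_ne_one_of_twist_ne hx hy hxy hst hA₃ hB₃ hσx
  · exact hst (h.twist_eq_of_mul_inv_eq_of_mul_inv_eq hA₃ hB₂)

theorem twist_eq_of_inv_ne (h : IsSkewAnticomm inv σ) {x y : G} (hx : inv x ≠ x)
    (hy : inv y ≠ y) : twist inv x = twist inv y := by
  by_cases hxy : x * y = y * x
  · exact h.twist_eq_of_commute hx hy hxy
  · exact h.twist_eq_of_not_commute hx hy hxy

theorem commute_twist_of_mul (h : IsSkewAnticomm inv σ) {w u g : G} (hw : inv w ≠ w)
    (hu : inv u ≠ u) (hug : inv (u * g) ≠ u * g) : Commute (twist inv w) g := by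
  have hwu : Commute (twist inv w) u := h.twist_eq_of_inv_ne hw hu ▸ h.commute_twist u
  have hwug : Commute (twist inv w) (u * g) :=
    h.twist_eq_of_inv_ne hw hug ▸ h.commute_twist (u * g)
  simpa using hwu.inv_right.mul_right hwug

theorem twist_mem_center (h : IsSkewAnticomm inv σ) {w : G} (hw : inv w ≠ w) :
    twist inv w ∈ Subgroup.center G := by
  rw [Subgroup.mem_center_iff]
  intro g
  by_cases hg : inv g = g
  swap
  · exact (h.twist_eq_of_inv_ne hw hg ▸ h.commute_twist g).symm.eq
  by_cases h₁ : inv (w * g) = w * g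
  swap
  · exact (h.commute_twist_of_mul hw hw h₁).symm.eq
  have hw' : inv (inv w) ≠ inv w := by rw [h.inv_inv]; exact Ne.symm hw
  by_cases h₂ : inv (inv w * g) = inv w * g
  swap
  · exact (h.commute_twist_of_mul hw hw' h₂).symm.eq
  rw [h.inv_mul, hg, ← mul_twist inv w] at h₁
  rw [h.inv_mul, hg, h.inv_inv, ← h.twist_mul w] at h₂
  have hsw : twist inv w * w = w * twist inv w := h.commute_twist w
  set s := twist inv w
  have hsgs : s * g * s = g :=
    mul_left_cancel (calc w * (s * g * s) = s * w * g * s := by rw [hsw]; group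
      _ = g * w * s := by rw [h₂]
      _ = w * g := by rw [← h₁]; group)
  calc g * s = s * (s * g * s) := by rw [← mul_assoc, ← mul_assoc, h.twist_mul_self, one_mul]
    _ = s * g := by rw [hsgs]

theorem inv_eq_or_eq_twist_mul (h : IsSkewAnticomm inv σ) {w : G} (hw : inv w ≠ w) (x : G) :
    inv x = x ∨ inv x = twist inv w * x := by
  refine or_iff_not_imp_left.mpr fun hx => ?_
  rw [h.twist_eq_of_inv_ne hw hx, h.twist_mul]

theorem commutatorElement_eq (h : IsSkewAnticomm inv σ)
    (hc : ∀ x, twist inv x ∈ Subgroup.center G) (a b : G) :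
    ⁅a, b⁆ = twist inv b * twist inv a * (twist inv (a * b))⁻¹ := by
  have hab : a * b * twist inv (a * b) = b * a * (twist inv b * twist inv a) := by
    rw [mul_twist, h.inv_mul, ← mul_twist inv a, ← mul_twist inv b, mul_assoc b,
      ← mul_assoc _ a, ← Subgroup.mem_center_iff.mp (hc b) a]
    group
  set t := twist inv b * twist inv a * (twist inv (a * b))⁻¹
  have ht : t ∈ Subgroup.center G := mul_mem (mul_mem (hc b) (hc a)) (inv_mem (hc _))
  calc ⁅a, b⁆ = b * a * t * (b * a)⁻¹ := by
        rw [commutatorElement_def, ← mul_assoc, ← hab, mul_inv_cancel_right]; group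
    _ = t := by rw [Subgroup.mem_center_iff.mp ht, mul_inv_cancel_right]

theorem exists_inv_ne (h : IsSkewAnticomm inv σ) (hG : ¬ ∀ a b : G, a * b = b * a) :
    ∃ w : G, inv w ≠ w := by
  by_contra! hsym
  exact hG fun a b => by rw [← hsym (a * b), h.inv_mul, hsym, hsym]

theorem coe_commutator_eq (h : IsSkewAnticomm inv σ) {w : G} (hw : inv w ≠ w)
    (hG : ¬ ∀ a b : G, a * b = b * a) : (commutator G : Set G) = {1, twist inv w} := by
  set s := twist inv w
  have hzpowers : (Subgroup.zpowers s : Set G) = {1, s} :=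
    coe_zpowers_of_mul_self (h.twist_mul_self w)
  have htwist : ∀ x, twist inv x ∈ Subgroup.zpowers s := fun x => by
    by_cases hx : inv x = x
    · rw [(twist_eq_one_iff inv).mpr hx]; exact one_mem _
    · rw [h.twist_eq_of_inv_ne hx hw]; exact Subgroup.mem_zpowers s
  have hc : ∀ x, twist inv x ∈ Subgroup.center G := fun x =>
    Subgroup.zpowers_le.mpr (h.twist_mem_center hw) (htwist x)
  have hmem : ∀ a b : G, ⁅a, b⁆ ∈ Subgroup.zpowers s := fun a b => by
    rw [h.commutatorElement_eq hc]
    exact mul_mem (mul_mem (htwist b) (htwist a)) (inv_mem (htwist _))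
  have hle : commutator G ≤ Subgroup.zpowers s := by
    rw [commutator_def, Subgroup.commutator_le]
    exact fun a _ b _ => hmem a b
  obtain ⟨a, b, hab⟩ : ∃ a b : G, a * b ≠ b * a := by simpa using hG
  have hs : s ∈ commutator G := by
    have hab' := hmem a b
    rw [← SetLike.mem_coe, hzpowers] at hab'
    rcases hab' with h1 | hs
    · exact absurd (commutatorElement_eq_one_iff_mul_comm.mp h1) hab
    · exact hs ▸ Subgroup.commutator_mem_commutator (Subgroup.mem_top a) (Subgroup.mem_top b)
  exact Set.Subset.antisymm (hzpowers ▸ SetLike.coe_subset_coe.mpr hle)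
    (Set.insert_subset (one_mem _) (Set.singleton_subset_iff.mpr hs))

end IsSkewAnticomm

theorem stmt16 {R : Type} [CommRing R] (hchar : ringChar R ≠ 2) {G : Type} [Group G]
    (inv : G → G) (hmul : ∀ x y : G, inv (x * y) = inv y * inv x)
    (hinv : ∀ x : G, inv (inv x) = x) (σ : G →* Rˣ) (hnt : σ ≠ 1)
    (hcompat : ∀ x : G, x * inv x ∈ σ.ker)
    (hanti : ∀ α ∈ skewSet inv σ, ∀ β ∈ skewSet inv σ, α * β + β * α = 0)
    (hnab : ¬ ∀ a b : G, a * b = b * a) :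
    ∃ s : G, s ≠ 1 ∧ (commutator G : Set G) = {1, s} ∧
      s ∈ Subgroup.center G ∧ inv s = s ∧ s ^ 2 = 1 ∧
      ∀ x : G, inv x = x ∨ inv x = s * x := by
  have : Nontrivial R := by
    by_contra hR
    rw [not_nontrivial_iff_subsingleton] at hR
    exact hnt (MonoidHom.ext fun _ => Subsingleton.elim _ _)
  have h : IsSkewAnticomm inv σ := ⟨hmul, hinv, hcompat, Ring.two_ne_zero hchar, hanti⟩
  obtain ⟨w, hw⟩ := h.exists_inv_ne hnab
  exact ⟨twist inv w, (twist_eq_one_iff inv).not.mpr hw, h.coe_commutator_eq hw hnab,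
    h.twist_mem_center hw, h.inv_twist w, by rw [pow_two, h.twist_mul_self],
    h.inv_eq_or_eq_twist_mul hw⟩
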